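/- arXiv:0805.2755 — 2 statements merged into one kernel-verified Lean document; each statement's English description precedes it below -/
import Mathlib

section
/- Over the ring R = ℚ[a,h,x₁,x₂,x₃,x₄], the pair of matrices (U₀, U₁) defines a morphism of matrix factorizations Λ₀ from (P₀, P₁) to (Q₀, Q₁), i.e. the matrix identities U₁·P₀ = Q₀·U₀ and U₀·P₁ = Q₁·U₁ hold, where U₀ = [[x₄ − x₂, 0],[x₁ − x₂ + x₃ + 2x₄ − (3/2)h, 1]] and U₁ = [[x₄, −x₂],[−1, 1]]. -/
noncomputable section

open MvPolynomial

/-- The polynomial ring `R = ℚ[a,h,x₁,x₂,x₃,x₄]`, with `a = X 0`, `h = X 1`, `xᵢ = X (i+1)`. -/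
abbrev S6 : Type := MvPolynomial (Fin 6) ℚ

noncomputable def aP : S6 := X 0
noncomputable def hP : S6 := X 1
noncomputable def x1 : S6 := X 2
noncomputable def x2 : S6 := X 3
noncomputable def x3 : S6 := X 4
noncomputable def x4 : S6 := X 5

/-- `π̄_{ij} = x_i² + x_i x_j + x_j² − (3/2)h(x_i + x_j) − 3a`. -/
noncomputable def piBar (xi xj : S6) : S6 :=
  xi ^ 2 + xi * xj + xj ^ 2 - C (3 / 2 : ℚ) * hP * (xi + xj) - 3 * aP

/-- `ū₁`. -/
noncomputable def uBar1 : S6 :=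
  (x1 + x2) ^ 2 + (x1 + x2) * (x3 + x4) + (x3 + x4) ^ 2 - 3 * x1 * x2
    - C (3 / 2 : ℚ) * hP * (x1 + x2 + x3 + x4) - 3 * aP

/-- `ū₂ = −3(x₃+x₄) + 3h`. -/
noncomputable def uBar2 : S6 := -3 * (x3 + x4) + 3 * hP

/-- `P₀`, the first differential of the factorization `C̄(Γ⁰)`. -/
noncomputable def P0 : Matrix (Fin 2) (Fin 2) S6 := !![piBar x4 x1, x2 - x3; piBar x3 x2, x4 - x1]

/-- `P₁`, the second differential of the factorization `C̄(Γ⁰)`. -/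
noncomputable def P1 : Matrix (Fin 2) (Fin 2) S6 := !![x1 - x4, x2 - x3; piBar x3 x2, -piBar x4 x1]

/-- `Q₀`, the first differential of the factorization `C̄(Γ¹)`. -/
noncomputable def Q0 : Matrix (Fin 2) (Fin 2) S6 :=
  !![uBar1, x1 * x2 - x3 * x4; uBar2, x3 + x4 - x1 - x2]

/-- `Q₁`, the second differential of the factorization `C̄(Γ¹)`. -/
noncomputable def Q1 : Matrix (Fin 2) (Fin 2) S6 :=
  !![x1 + x2 - x3 - x4, x1 * x2 - x3 * x4; uBar2, -uBar1]

noncomputable def U0 : Matrix (Fin 2) (Fin 2) S6 :=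
  !![x4 - x2, 0; x1 - x2 + x3 + 2 * x4 - C (3 / 2 : ℚ) * hP, 1]

noncomputable def U1 : Matrix (Fin 2) (Fin 2) S6 := !![x4, -x2; -1, 1]

noncomputable def V0 : Matrix (Fin 2) (Fin 2) S6 :=
  !![1, 0; -x1 + x2 - x3 - 2 * x4 + C (3 / 2 : ℚ) * hP, x4 - x2]

noncomputable def V1 : Matrix (Fin 2) (Fin 2) S6 := !![1, x2; 1, x4]

/-- `ring` does not see that the coefficient `C (3 / 2)` is `3 / 2`; the entries involving `h` are
closed by `linear_combination` with this identity instead. -/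
lemma C_three_halves_mul_two {σ : Type*} : (C (3 / 2 : ℚ) : MvPolynomial σ ℚ) * 2 = 3 := by
  rw [← map_ofNat C 2, ← map_mul]
  norm_num [map_ofNat]

lemma U1_mul_P0 : U1 * P0 = Q0 * U0 := by
  rw [U1, P0, Q0, U0, Matrix.mul_fin_two, Matrix.mul_fin_two]
  congr 1
  refine Matrix.vec2_eq (Matrix.vec2_eq ?_ ?_) (Matrix.vec2_eq ?_ ?_)
  all_goals simp only [piBar, uBar1, uBar2]
  · ring
  · ring
  · linear_combination hP * (x4 - x2) * C_three_halves_mul_two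
  · ring

lemma U0_mul_P1 : U0 * P1 = Q1 * U1 := by
  rw [U0, P1, Q1, U1, Matrix.mul_fin_two, Matrix.mul_fin_two]
  congr 1
  refine Matrix.vec2_eq (Matrix.vec2_eq ?_ ?_) (Matrix.vec2_eq ?_ ?_)
  all_goals simp only [piBar, uBar1, uBar2]
  · ring
  · ring
  · linear_combination hP * x4 * C_three_halves_mul_two
  · linear_combination -(hP * x2) * C_three_halves_mul_two

/-- `(U₀, U₁)` is a morphism of matrix factorizations
`Λ₀ : (P₀, P₁) → (Q₀, Q₁)`. -/
theorem stmt_10 : U1 * P0 = Q0 * U0 ∧ U0 * P1 = Q1 * U1 :=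
  ⟨U1_mul_P0, U0_mul_P1⟩

end
end

section
/- Over the ring R = ℚ[a,h,x₁,x₂,x₃,x₄], the pair of matrices (V₀, V₁) defines a morphism of matrix factorizations Λ₁ from (Q₀, Q₁) to (P₀, P₁), i.e. the matrix identities V₁·Q₀ = P₀·V₀ and V₀·Q₁ = P₁·V₁ hold, where V₀ = [[1, 0],[−x₁ + x₂ − x₃ − 2x₄ + (3/2)h, x₄ − x₂]] and V₁ = [[1, x₂],[1, x₄]]. -/
noncomputable section

open MvPolynomial

theorem Matrix.of_fin_two_inj {α : Type*} {a b c d a' b' c' d' : α} :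
    !![a, b; c, d] = !![a', b'; c', d'] ↔ a = a' ∧ b = b' ∧ c = c' ∧ d = d' := by
  simp [and_assoc]

/- `ring` cannot see `2 * C (3/2) = 3` in `MvPolynomial`; writing `3h` as `2 · (3/2)h`
leaves only identities in the atoms `C (3/2)`, `h`, `a`, `xᵢ`. -/
theorem uBar2_eq : uBar2 = -3 * (x3 + x4) + 2 * C (3 / 2 : ℚ) * hP := by
  have two_mul_three_halves : (2 : S6) * C (3 / 2 : ℚ) = 3 := by
    rw [← map_ofNat C 2, ← map_ofNat C 3, ← C_mul]
    norm_num
  rw [uBar2, mul_assoc 2, ← mul_assoc, two_mul_three_halves]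

theorem V1_mul_Q0 : V1 * Q0 = P0 * V0 := by
  simp only [V0, V1, P0, Q0, Matrix.mul_fin_two, Matrix.of_fin_two_inj, piBar, uBar1, uBar2_eq]
  refine ⟨?_, ?_, ?_, ?_⟩ <;> ring

theorem V0_mul_Q1 : V0 * Q1 = P1 * V1 := by
  simp only [V0, V1, P1, Q1, Matrix.mul_fin_two, Matrix.of_fin_two_inj, piBar, uBar1, uBar2_eq]
  refine ⟨?_, ?_, ?_, ?_⟩ <;> ring

/-- `(V₀, V₁)` is a morphism of matrix factorizations
`Λ₁ : (Q₀, Q₁) → (P₀, P₁)`. -/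
theorem stmt_11 : V1 * Q0 = P0 * V0 ∧ V0 * Q1 = P1 * V1 :=
  ⟨V1_mul_Q0, V0_mul_Q1⟩

end
end
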